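/- arXiv:2408.16838 — 2 statements merged into one kernel-verified Lean document; each statement's English description precedes it below -/
import Mathlib

section
/- For every m ≥ 1 and k ≥ 0, the iterated divergence of a vector field X with respect to the rescaled measure μ/δ^{m-1} satisfies div^k_{μ/δ^{m-1}}(X) = Σ_{j=0}^k c_{j,k,m} · div^{k-j}_μ(X)/δ^j for suitable real coefficients c_{j,k,m}, on the set where δ > 0 and X δ = 1. -/
/-!
Since `L (φ ψ) = (L φ) ψ + φ · Xψ` and `Xδ = 1`, one application of `L` to `φ / δ^q` gives
`L φ / δ^q - q φ / δ^(q+1)`. By induction, `L^k (ρ / δ^p)` is therefore a combination of the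
`L^(k-j) ρ / δ^(p+j)` whose coefficients depend only on `p`, `k`, `j`; dividing by `ρ / δ^p`
with `p = m - 1` gives the expansion of `c k` in the `d (k - j) / δ^j`.
-/

open Finset Filter Topology
open scoped ContDiff

/-- A density `g · dx` on `ℝⁿ` is encoded by `g`; this is its Lie derivative along `X`. -/
noncomputable def lieDerivDensity {n : ℕ} (X : (Fin n → ℝ) → Fin n → ℝ) (g : (Fin n → ℝ) → ℝ)
    (x : Fin n → ℝ) : ℝ :=
  ∑ i, fderiv ℝ (fun y => g y * X y i) x (Pi.single i 1)

/-- In closed form `(-1)^j (k choose j) p (p+1) ⋯ (p+j-1)`, by the Leibniz rule for `L`. -/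
noncomputable def divPowCoeff (p : ℕ) : ℕ → ℕ → ℝ
  | 0, 0 => 1
  | 0, _ + 1 => 0
  | k + 1, 0 => divPowCoeff p k 0
  | k + 1, j + 1 => divPowCoeff p k (j + 1) - (p + j) * divPowCoeff p k j

lemma divPowCoeff_eq_zero_of_lt (p : ℕ) {k j : ℕ} (h : k < j) : divPowCoeff p k j = 0 := by
  induction k generalizing j with
  | zero => obtain ⟨j, rfl⟩ := Nat.exists_eq_succ_of_ne_zero h.ne'; rfl
  | succ k ih =>
    obtain ⟨j, rfl⟩ := Nat.exists_eq_succ_of_ne_zero (Nat.ne_zero_of_lt h)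
    simp only [divPowCoeff, ih (by omega : k < j + 1), ih (by omega : k < j), mul_zero, sub_zero]

lemma sum_divPowCoeff_succ_mul (p k : ℕ) (u : ℕ → ℝ) :
    ∑ j ∈ range (k + 2), divPowCoeff p (k + 1) j * u j =
      ∑ j ∈ range (k + 1), divPowCoeff p k j * (u j - (p + j) * u (j + 1)) := by
  have hshift : ∑ j ∈ range (k + 1), divPowCoeff p k j * u j =
      divPowCoeff p k 0 * u 0 + ∑ j ∈ range (k + 1), divPowCoeff p k (j + 1) * u (j + 1) := by
    rw [sum_range_succ', sum_range_succ (fun j => divPowCoeff p k (j + 1) * u (j + 1)),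
      divPowCoeff_eq_zero_of_lt p k.lt_succ_self, zero_mul, add_zero, add_comm]
  have hswap (j : ℕ) : (p + j : ℝ) * divPowCoeff p k j * u (j + 1) =
      divPowCoeff p k j * ((p + j) * u (j + 1)) := by ring
  rw [sum_range_succ']
  simp only [divPowCoeff, sub_mul, mul_sub, sum_sub_distrib, hshift, hswap]
  ring

section

variable {n : ℕ} {X : (Fin n → ℝ) → Fin n → ℝ} {x : Fin n → ℝ}

local notation "𝓛" => lieDerivDensity X

lemma lieDerivDensity_mul {φ ψ : (Fin n → ℝ) → ℝ} (hX : DifferentiableAt ℝ X x)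
    (hφ : DifferentiableAt ℝ φ x) (hψ : DifferentiableAt ℝ ψ x) :
    𝓛 (fun y => φ y * ψ y) x = 𝓛 φ x * ψ x + φ x * fderiv ℝ ψ x (X x) := by
  have hcoord : fderiv ℝ ψ x (X x) = ∑ i, X x i * fderiv ℝ ψ x (Pi.single i 1) := by
    conv_lhs => rw [← Finset.univ_sum_single (X x)]
    refine (map_sum _ _ _).trans (sum_congr rfl fun i _ => ?_)
    rw [← smul_eq_mul, ← map_smul, ← Pi.single_smul', smul_eq_mul, mul_one]
  have hterm (i : Fin n) : fderiv ℝ (fun y => φ y * ψ y * X y i) x (Pi.single i 1) =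
      fderiv ℝ (fun y => φ y * X y i) x (Pi.single i 1) * ψ x +
        φ x * (X x i * fderiv ℝ ψ x (Pi.single i 1)) := by
    have hφXi := hφ.fun_mul (differentiableAt_pi.1 hX i)
    rw [show (fun y => φ y * ψ y * X y i) = fun y => φ y * X y i * ψ y by ext; ring,
      fderiv_fun_mul hφXi hψ]
    simp only [add_apply, smul_apply, smul_eq_mul]
    ring
  simp only [lieDerivDensity, hterm, sum_add_distrib, ← sum_mul, ← mul_sum, hcoord]

lemma lieDerivDensity_div_pow {φ δ : (Fin n → ℝ) → ℝ} (hX : DifferentiableAt ℝ X x)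
    (hφ : DifferentiableAt ℝ φ x) (hδ : DifferentiableAt ℝ δ x) (hδx : δ x ≠ 0)
    (hXδ : fderiv ℝ δ x (X x) = 1) (q : ℕ) :
    𝓛 (fun y => φ y / δ y ^ q) x = 𝓛 φ x / δ x ^ q - q * φ x / δ x ^ (q + 1) := by
  have hψ : HasFDerivAt (fun y => (δ y ^ q)⁻¹)
      (-((δ x ^ q) ^ 2)⁻¹ • (q • δ x ^ (q - 1)) • fderiv ℝ δ x) x :=
    (hasDerivAt_inv (pow_ne_zero q hδx)).comp_hasFDerivAt x (hδ.hasFDerivAt.pow q)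
  simp only [div_eq_mul_inv]
  rw [lieDerivDensity_mul hX hφ hψ.differentiableAt, hψ.fderiv]
  simp only [smul_apply, hXδ, smul_eq_mul, nsmul_eq_mul]
  rcases q with _ | q
  · simp
  · simp only [Nat.add_sub_cancel]
    field_simp
    ring

lemma lieDerivDensity_const_mul {g : (Fin n → ℝ) → ℝ} (hX : DifferentiableAt ℝ X x)
    (hg : DifferentiableAt ℝ g x) (a : ℝ) :
    𝓛 (fun y => a * g y) x = a * 𝓛 g x := by
  simp only [lieDerivDensity, mul_sum, mul_assoc]
  refine sum_congr rfl fun i _ => ?_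
  rw [fderiv_const_mul (hg.fun_mul (differentiableAt_pi.1 hX i)), smul_apply, smul_eq_mul]

lemma lieDerivDensity_sum {ι : Type*} (s : Finset ι) {g : ι → (Fin n → ℝ) → ℝ}
    (hX : DifferentiableAt ℝ X x) (hg : ∀ j ∈ s, DifferentiableAt ℝ (g j) x) :
    𝓛 (fun y => ∑ j ∈ s, g j y) x = ∑ j ∈ s, 𝓛 (g j) x := by
  simp only [lieDerivDensity, sum_mul]
  rw [sum_comm]
  refine sum_congr rfl fun i _ => ?_
  rw [fderiv_fun_sum fun j hj => (hg j hj).fun_mul (differentiableAt_pi.1 hX i), _root_.sum_apply]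

lemma lieDerivDensity_congr_of_eventuallyEq {f g : (Fin n → ℝ) → ℝ} (h : f =ᶠ[𝓝 x] g) :
    𝓛 f x = 𝓛 g x :=
  sum_congr rfl fun i _ => by rw [(h.fun_mul (EventuallyEq.refl _ fun y => X y i)).fderiv_eq]

lemma contDiff_lieDerivDensity {g : (Fin n → ℝ) → ℝ} (hX : ContDiff ℝ ∞ X)
    (hg : ContDiff ℝ ∞ g) : ContDiff ℝ ∞ (𝓛 g) :=
  ContDiff.sum fun i _ =>
    ((hg.mul (contDiff_pi.1 hX i)).fderiv_right le_rfl).clm_apply contDiff_const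

lemma contDiff_iterate_lieDerivDensity {g : (Fin n → ℝ) → ℝ} (hX : ContDiff ℝ ∞ X)
    (hg : ContDiff ℝ ∞ g) (k : ℕ) : ContDiff ℝ ∞ (𝓛^[k] g) :=
  Function.Iterate.rec (ContDiff ℝ ∞) hg (fun _ h => contDiff_lieDerivDensity hX h) k

theorem iterate_lieDerivDensity_div_pow {φ δ : (Fin n → ℝ) → ℝ} {U : Set (Fin n → ℝ)}
    (hX : ContDiff ℝ ∞ X) (hφ : ContDiff ℝ ∞ φ) (hδ : Differentiable ℝ δ) (hU : IsOpen U)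
    (hδU : ∀ x ∈ U, δ x ≠ 0) (hXδ : ∀ x ∈ U, fderiv ℝ δ x (X x) = 1) (p k : ℕ) :
    ∀ x ∈ U, 𝓛^[k] (fun y => φ y / δ y ^ p) x =
      ∑ j ∈ range (k + 1), divPowCoeff p k j * (𝓛^[k - j] φ x / δ x ^ (p + j)) := by
  have hXx (x) : DifferentiableAt ℝ X x := hX.differentiable (by simp) x
  have hLφ (i x) : DifferentiableAt ℝ (𝓛^[i] φ) x :=
    (contDiff_iterate_lieDerivDensity hX hφ i).differentiable (by simp) x
  induction k with
  | zero => intro x _; simp [divPowCoeff]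
  | succ k ih =>
    intro x hx
    have hterm (j : ℕ) : DifferentiableAt ℝ (fun y => 𝓛^[k - j] φ y / δ y ^ (p + j)) x := by
      fun_prop (disch := exact pow_ne_zero _ (hδU x hx))
    calc 𝓛^[k + 1] (fun y => φ y / δ y ^ p) x
        = 𝓛 (fun y => ∑ j ∈ range (k + 1), divPowCoeff p k j * (𝓛^[k - j] φ y / δ y ^ (p + j)))
            x := by
          rw [Function.iterate_succ_apply']
          exact lieDerivDensity_congr_of_eventuallyEq (eventuallyEq_of_mem (hU.mem_nhds hx) ih)
      _ = ∑ j ∈ range (k + 1), divPowCoeff p k j * (𝓛 (𝓛^[k - j] φ) x / δ x ^ (p + j) -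
            (p + j) * (𝓛^[k - j] φ x / δ x ^ (p + j + 1))) := by
          rw [lieDerivDensity_sum _ (hXx x) fun j _ => (hterm j).const_mul _]
          refine sum_congr rfl fun j _ => ?_
          rw [lieDerivDensity_const_mul (hXx x) (hterm j),
            lieDerivDensity_div_pow (hXx x) (hLφ _ x) (hδ x) (hδU x hx) (hXδ x hx)]
          push_cast
          ring
      _ = ∑ j ∈ range (k + 2), divPowCoeff p (k + 1) j * (𝓛^[k + 1 - j] φ x / δ x ^ (p + j)) := by
          rw [sum_divPowCoeff_succ_mul]
          refine sum_congr rfl fun j hj => ?_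
          have hjk : k + 1 - j = k - j + 1 := by have := mem_range.1 hj; omega
          rw [hjk, Function.iterate_succ_apply', Nat.add_sub_add_right, add_assoc]

end

/-- For every `m ≥ 1` and `k ≥ 0` there are universal real coefficients `c_{j,k,m}` such that
the iterated divergence with respect to the rescaled density `μ/δ^{m-1}` satisfies
`div^k_{μ/δ^{m-1}}(X) = ∑_{j=0}^k c_{j,k,m} · div^{k-j}_μ(X) / δ^j`
on the set where `δ > 0` and `Xδ = 1`.  Densities on `ℝⁿ` are written as `g·dx` and the Lie
derivative along `X` is `L(g·dx) = (∑ᵢ ∂ᵢ(g Xᵢ))·dx`; the iterated divergences `c k` (resp.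
`d k`) are defined by `L^k(μ/δ^{m-1}) = (c k)·μ/δ^{m-1}` (resp. `L^k μ = (d k)·μ`). -/
theorem stmt1 :
    ∀ m k : ℕ, 1 ≤ m →
    ∃ coef : ℕ → ℝ,
      ∀ (n : ℕ) (ρ : (Fin n → ℝ) → ℝ) (X : (Fin n → ℝ) → (Fin n → ℝ))
        (δ : (Fin n → ℝ) → ℝ) (U : Set (Fin n → ℝ)),
        IsOpen U →
        ContDiff ℝ (⊤ : ℕ∞) ρ → (∀ x, 0 < ρ x) →
        ContDiff ℝ (⊤ : ℕ∞) X → ContDiff ℝ (⊤ : ℕ∞) δ →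
        (∀ x ∈ U, 0 < δ x) →
        (∀ x ∈ U, fderiv ℝ δ x (X x) = 1) →
        ∀ (L : ((Fin n → ℝ) → ℝ) → ((Fin n → ℝ) → ℝ)),
        (∀ g x, L g x = ∑ i, fderiv ℝ (fun y => g y * X y i) x (Pi.single i 1)) →
        ∀ (c d : ℕ → (Fin n → ℝ) → ℝ),
        (∀ j x, x ∈ U → (L^[j] (fun y => ρ y / δ y ^ (m - 1))) x = c j x * (ρ x / δ x ^ (m - 1))) →
        (∀ j x, x ∈ U → (L^[j] ρ) x = d j x * ρ x) →
        ∀ x ∈ U, c k x = ∑ j ∈ Finset.range (k + 1), coef j * (d (k - j) x / δ x ^ j) := by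
  intro m k _
  refine ⟨divPowCoeff (m - 1) k, ?_⟩
  intro n ρ X δ U hU hρ hρpos hX hδ hδpos hXδ L hL c d hc hd x hx
  obtain rfl : L = lieDerivDensity X := funext fun g => funext (hL g)
  have hδU : ∀ y ∈ U, δ y ≠ 0 := fun y hy => (hδpos y hy).ne'
  have hexpand := iterate_lieDerivDensity_div_pow hX hρ (hδ.differentiable (by simp)) hU hδU
    hXδ (m - 1) k x hx
  rw [hc k x hx] at hexpand
  refine mul_right_cancel₀ (b := ρ x / δ x ^ (m - 1))
    (div_ne_zero (hρpos x).ne' (pow_ne_zero _ (hδU x hx))) ?_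
  rw [hexpand, sum_mul]
  refine sum_congr rfl fun j _ => ?_
  rw [hd _ x hx, pow_add]
  field_simp
end

section
/- In the three-dimensional Heisenberg group with left-invariant orthonormal frame X₁, X₂, Reeb field X₀, and a function δ of class C² satisfying the eikonal equation (X₁δ)² + (X₂δ)² = 1 on an open set, the function F₅ := (X₀X₁δ)² + (X₀X₂δ)² equals F₂², where F₂ := −(X₂δ)(X₁X₀δ) + (X₁δ)(X₂X₀δ), provided δ is smooth enough for the derivatives to commute appropriately (using [X₀, X_i] = 0). -/
/-- Derivative of a function along a vector field on `ℝ³`. -/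
noncomputable def Dvf (v : (Fin 3 → ℝ) → (Fin 3 → ℝ)) (f : (Fin 3 → ℝ) → ℝ)
    (p : Fin 3 → ℝ) : ℝ :=
  fderiv ℝ f p (v p)

/-- The left-invariant frame of the 3-dimensional Heisenberg group:
`X₁ = ∂_x − (y/2)∂_z`, `X₂ = ∂_y + (x/2)∂_z`, and the Reeb field `X₀ = ∂_z`. -/
noncomputable def X1v (p : Fin 3 → ℝ) : Fin 3 → ℝ := ![1, 0, -(p 1) / 2]
noncomputable def X2v (p : Fin 3 → ℝ) : Fin 3 → ℝ := ![0, 1, (p 0) / 2]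
noncomputable def X0v (_ : Fin 3 → ℝ) : Fin 3 → ℝ := ![0, 0, 1]

/-- In the 3-dimensional Heisenberg group, if `δ` is `C³` on an open set `U` and satisfies the
eikonal equation `(X₁δ)² + (X₂δ)² = 1` on `U`, then
`F₅ := (X₀X₁δ)² + (X₀X₂δ)²` equals `F₂²`, where
`F₂ := −(X₂δ)(X₁X₀δ) + (X₁δ)(X₂X₀δ)`. -/
theorem stmt5 (U : Set (Fin 3 → ℝ)) (hU : IsOpen U) (δ : (Fin 3 → ℝ) → ℝ)
    (hδ : ContDiffOn ℝ 3 δ U)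
    (heik : ∀ p ∈ U, (Dvf X1v δ p) ^ 2 + (Dvf X2v δ p) ^ 2 = 1) :
    ∀ p ∈ U,
      (Dvf X0v (Dvf X1v δ) p) ^ 2 + (Dvf X0v (Dvf X2v δ) p) ^ 2 =
        (-(Dvf X2v δ p) * (Dvf X1v (Dvf X0v δ) p) +
          (Dvf X1v δ p) * (Dvf X2v (Dvf X0v δ) p)) ^ 2 := by
  intro p hp
  have hUp : U ∈ nhds p := hU.mem_nhds hp
  have hδp : ContDiffAt ℝ 3 δ p := hδ.contDiffAt hUp
  have hev : ∀ᶠ q in nhds p, HasFDerivAt δ (fderiv ℝ δ q) q := by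
    filter_upwards [hUp] with q hq
    exact ((hδ.contDiffAt (hU.mem_nhds hq)).differentiableAt (by norm_num)).hasFDerivAt
  have hf'' : HasFDerivAt (fderiv ℝ δ) (fderiv ℝ (fderiv ℝ δ) p) p :=
    ((hδp.fderiv_right (m := 2) (by norm_num)).differentiableAt (by norm_num)).hasFDerivAt
  set f'' := fderiv ℝ (fderiv ℝ δ) p with hf''def
  have hsymm : ∀ v w, f'' v w = f'' w v :=
    second_derivative_symmetric_of_eventually hev hf''
  -- derivatives of the vector fields
  have hX1eq : X1v = fun q : Fin 3 → ℝ => (-(1/2:ℝ) * q 1) • ![0,0,1] + ![1,0,0] := by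
    funext q; ext i; fin_cases i <;> simp [X1v] <;> ring
  have hX2eq : X2v = fun q : Fin 3 → ℝ => ((1/2:ℝ) * q 0) • ![0,0,1] + ![0,1,0] := by
    funext q; ext i; fin_cases i <;> simp [X2v] <;> ring
  set L1 : (Fin 3 → ℝ) →L[ℝ] (Fin 3 → ℝ) :=
    ((-(1/2:ℝ)) • (ContinuousLinearMap.proj 1 : (Fin 3 → ℝ) →L[ℝ] ℝ)).smulRight ![0,0,1] with hL1def
  set L2 : (Fin 3 → ℝ) →L[ℝ] (Fin 3 → ℝ) :=
    (((1/2:ℝ)) • (ContinuousLinearMap.proj 0 : (Fin 3 → ℝ) →L[ℝ] ℝ)).smulRight ![0,0,1] with hL2def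
  have hX1 : HasFDerivAt X1v L1 p := by
    rw [hX1eq]
    exact (((ContinuousLinearMap.proj 1 :
      (Fin 3 → ℝ) →L[ℝ] ℝ).hasFDerivAt.const_mul (-(1/2:ℝ))).smul_const ![0,0,1]).add_const _
  have hX2 : HasFDerivAt X2v L2 p := by
    rw [hX2eq]
    exact (((ContinuousLinearMap.proj 0 :
      (Fin 3 → ℝ) →L[ℝ] ℝ).hasFDerivAt.const_mul ((1/2:ℝ))).smul_const ![0,0,1]).add_const _
  have hg1 : HasFDerivAt (Dvf X1v δ) ((fderiv ℝ δ p).comp L1 + f''.flip (X1v p)) p :=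
    hf''.clm_apply hX1
  have hg2 : HasFDerivAt (Dvf X2v δ) ((fderiv ℝ δ p).comp L2 + f''.flip (X2v p)) p :=
    hf''.clm_apply hX2
  have hg0 : HasFDerivAt (Dvf X0v δ)
      ((fderiv ℝ δ p).comp (0 : (Fin 3 → ℝ) →L[ℝ] (Fin 3 → ℝ)) + f''.flip ![0,0,1]) p :=
    hf''.clm_apply (hasFDerivAt_const ![0,0,1] p)
  -- evaluate the key second derivatives
  have e1 : Dvf X0v (Dvf X1v δ) p = f'' ![0,0,1] (X1v p) := by
    show fderiv ℝ (Dvf X1v δ) p (X0v p) = _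
    rw [hg1.fderiv]
    simp [X0v, hL1def]
  have e2 : Dvf X0v (Dvf X2v δ) p = f'' ![0,0,1] (X2v p) := by
    show fderiv ℝ (Dvf X2v δ) p (X0v p) = _
    rw [hg2.fderiv]
    simp [X0v, hL2def]
  have e3 : Dvf X1v (Dvf X0v δ) p = f'' ![0,0,1] (X1v p) := by
    show fderiv ℝ (Dvf X0v δ) p (X1v p) = _
    rw [hg0.fderiv]
    simp [hsymm (X1v p) ![0,0,1]]
  have e4 : Dvf X2v (Dvf X0v δ) p = f'' ![0,0,1] (X2v p) := by
    show fderiv ℝ (Dvf X0v δ) p (X2v p) = _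
    rw [hg0.fderiv]
    simp [hsymm (X2v p) ![0,0,1]]
  -- differentiate the eikonal equation in the vertical direction
  have hconst : (fun q => Dvf X1v δ q * Dvf X1v δ q + Dvf X2v δ q * Dvf X2v δ q)
      =ᶠ[nhds p] fun _ => (1 : ℝ) := by
    filter_upwards [hUp] with q hq
    have := heik q hq
    rw [← pow_two, ← pow_two]
    exact this
  have hH : HasFDerivAt (fun q => Dvf X1v δ q * Dvf X1v δ q + Dvf X2v δ q * Dvf X2v δ q)
      (Dvf X1v δ p • ((fderiv ℝ δ p).comp L1 + f''.flip (X1v p)) +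
        Dvf X1v δ p • ((fderiv ℝ δ p).comp L1 + f''.flip (X1v p)) +
        (Dvf X2v δ p • ((fderiv ℝ δ p).comp L2 + f''.flip (X2v p)) +
          Dvf X2v δ p • ((fderiv ℝ δ p).comp L2 + f''.flip (X2v p)))) p :=
    (hg1.mul hg1).add (hg2.mul hg2)
  have hzero : HasFDerivAt (fun q => Dvf X1v δ q * Dvf X1v δ q + Dvf X2v δ q * Dvf X2v δ q)
      (0 : (Fin 3 → ℝ) →L[ℝ] ℝ) p :=
    (hasFDerivAt_const (1:ℝ) p).congr_of_eventuallyEq hconst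
  have hkey := congrArg (fun L : (Fin 3 → ℝ) →L[ℝ] ℝ => L ![0,0,1]) (hH.unique hzero)
  simp only [ContinuousLinearMap.add_apply, ContinuousLinearMap.smul_apply,
    ContinuousLinearMap.comp_apply, ContinuousLinearMap.flip_apply,
    ContinuousLinearMap.zero_apply, hL1def, hL2def, ContinuousLinearMap.smulRight_apply,
    ContinuousLinearMap.proj_apply] at hkey
  have h1 : (![0,0,1] : Fin 3 → ℝ) 1 = 0 := rfl
  have h0 : (![0,0,1] : Fin 3 → ℝ) 0 = 0 := rfl
  simp only [h1, h0, smul_eq_mul, mul_zero, smul_zero, zero_smul, map_zero, add_zero, zero_add] at hkey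
  have key2 : Dvf X1v δ p * f'' ![0,0,1] (X1v p) + Dvf X2v δ p * f'' ![0,0,1] (X2v p) = 0 := by
    linarith [hkey]
  have heikp := heik p hp
  rw [e1, e2, e3, e4]
  linear_combination (Dvf X1v δ p * f'' ![0,0,1] (X1v p) + Dvf X2v δ p * f'' ![0,0,1] (X2v p)) * key2 -
    (f'' ![0,0,1] (X1v p) ^ 2 + f'' ![0,0,1] (X2v p) ^ 2) * heikp
end
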